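/- arXiv:1912.06220 — 4 statements merged into one kernel-verified Lean document; each statement's English description precedes it below -/
import Mathlib

section
/- Let Ω ⊆ ℝⁿ be open convex and h : Ω → ℝ a convex function that is piecewise affine linear with respect to a finite polytopal decomposition of Ω (i.e., Ω is covered by finitely many n-dimensional closed polytopes, on each of which h is affine). Let U be the complement in Ω of the finite set of vertices of the decomposition. Then the union ⋃_{y ∈ U} ∇h(y) of the gradient images over U is contained in a finite union of affine hyperplanes of ℝⁿ, and hence has Lebesgue measure zero. -/
open scoped RealInnerProductSpace
open MeasureTheory

noncomputable section

/-- The gradient image (subdifferential) of `h` at `x₀` relative to the domain `Ω`. -/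
def gradientImage {n : ℕ} (Ω : Set (EuclideanSpace ℝ (Fin n)))
    (h : EuclideanSpace ℝ (Fin n) → ℝ) (x₀ : EuclideanSpace ℝ (Fin n)) :
    Set (EuclideanSpace ℝ (Fin n)) :=
  {p | ∀ x ∈ Ω, h x₀ + ⟪x - x₀, p⟫ ≤ h x}

/-- For a piecewise affine convex function, the union of all gradient images taken over the
complement of the (finitely many) vertices is contained in a finite union of affine hyperplanes,
hence has Lebesgue measure zero. The faces of dimension ≥ 1 are encoded by the family `F`, on
each of which `h` is affine with linear part `m i`, together with a nonzero direction `v i`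
along which one can move back and forth inside the face. -/
theorem gradientImage_union_over_nonvertices_measure_zero {n : ℕ}
    (Ω : Set (EuclideanSpace ℝ (Fin n))) (hΩopen : IsOpen Ω) (hΩconv : Convex ℝ Ω)
    (h : EuclideanSpace ℝ (Fin n) → ℝ) (hconv : ConvexOn ℝ Ω h)
    (ι : Type) [Fintype ι]
    (F : ι → Set (EuclideanSpace ℝ (Fin n)))
    (m v : ι → EuclideanSpace ℝ (Fin n)) (c : ι → ℝ)
    (vertices : Finset (EuclideanSpace ℝ (Fin n)))
    (hFΩ : ∀ i, F i ⊆ Ω)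
    (hcover : Ω \ (vertices : Set (EuclideanSpace ℝ (Fin n))) ⊆ ⋃ i, F i)
    (haff : ∀ i, ∀ x ∈ F i, h x = ⟪m i, x⟫ + c i)
    (hv : ∀ i, v i ≠ 0)
    (hdir : ∀ i, ∀ y ∈ F i, ∃ ε > (0 : ℝ), y + ε • v i ∈ F i ∧ y - ε • v i ∈ F i) :
    (⋃ y ∈ Ω \ (vertices : Set (EuclideanSpace ℝ (Fin n))), gradientImage Ω h y) ⊆
      (⋃ i, {p : EuclideanSpace ℝ (Fin n) | ⟪v i, p⟫ = ⟪v i, m i⟫}) ∧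
    volume (⋃ y ∈ Ω \ (vertices : Set (EuclideanSpace ℝ (Fin n))), gradientImage Ω h y) = 0 := by
  have key : (⋃ y ∈ Ω \ (vertices : Set (EuclideanSpace ℝ (Fin n))), gradientImage Ω h y) ⊆
      (⋃ i, {p : EuclideanSpace ℝ (Fin n) | ⟪v i, p⟫ = ⟪v i, m i⟫}) := by
    intro p hp
    simp only [Set.mem_iUnion] at hp
    obtain ⟨y, hy, hpgrad⟩ := hp
    obtain ⟨i, hyi⟩ := Set.mem_iUnion.mp (hcover hy)
    refine Set.mem_iUnion.mpr ⟨i, ?_⟩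
    obtain ⟨ε, hε, h1, h2⟩ := hdir i y hyi
    have e1 := hpgrad _ (hFΩ i h1)
    have e2 := hpgrad _ (hFΩ i h2)
    rw [haff i _ h1, haff i y hyi] at e1
    rw [haff i _ h2, haff i y hyi] at e2
    have s1 : y + ε • v i - y = ε • v i := by abel
    have s2 : y - ε • v i - y = -(ε • v i) := by abel
    rw [s1, real_inner_smul_left, inner_add_right, real_inner_smul_right] at e1
    rw [s2, inner_neg_left, real_inner_smul_left, inner_sub_right,
      real_inner_smul_right] at e2
    have le1 : ⟪v i, p⟫ ≤ ⟪m i, v i⟫ := le_of_mul_le_mul_left (by linarith) hε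
    have le2 : ⟪m i, v i⟫ ≤ ⟪v i, p⟫ := le_of_mul_le_mul_left (by linarith) hε
    have : ⟪v i, p⟫ = ⟪m i, v i⟫ := le_antisymm le1 le2
    rw [Set.mem_setOf_eq, this, real_inner_comm]
  refine ⟨key, measure_mono_null key ?_⟩
  refine measure_iUnion_null fun i => ?_
  have hK : (LinearMap.ker (innerSL ℝ (v i) : EuclideanSpace ℝ (Fin n) →ₗ[ℝ] ℝ) : Submodule ℝ (EuclideanSpace ℝ (Fin n))) ≠ ⊤ := by
    intro htop
    have hmem : v i ∈ LinearMap.ker (innerSL ℝ (v i) : EuclideanSpace ℝ (Fin n) →ₗ[ℝ] ℝ) := htop ▸ Submodule.mem_top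
    simp only [LinearMap.mem_ker, ContinuousLinearMap.coe_coe, innerSL_apply_apply] at hmem
    exact hv i (inner_self_eq_zero.mp hmem)
  have hset : {p : EuclideanSpace ℝ (Fin n) | ⟪v i, p⟫ = ⟪v i, m i⟫}
      = (fun x => m i + x) '' (LinearMap.ker (innerSL ℝ (v i) : EuclideanSpace ℝ (Fin n) →ₗ[ℝ] ℝ) : Set (EuclideanSpace ℝ (Fin n))) := by
    ext p
    simp only [Set.mem_setOf_eq, Set.mem_image, SetLike.mem_coe, LinearMap.mem_ker,
      ContinuousLinearMap.coe_coe, innerSL_apply_apply]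
    constructor
    · intro hp
      exact ⟨p - m i, by rw [inner_sub_right, hp, sub_self], by abel⟩
    · rintro ⟨x, hx, rfl⟩
      rw [inner_add_right, hx, add_zero]
  rw [hset, Set.image_add_left, measure_preimage_add]
  exact Measure.addHaar_submodule _ _ hK
end
end

section
/- Let Ω ⊆ ℝⁿ be bounded, open and convex, and h : Ω → ℝ convex. Then the Monge-Ampère set function MA(h)(E) := λ(∇h(E)), defined for Borel sets E ⊆ Ω where ∇h(E) = ⋃_{x ∈ E} ∇h(x) and λ is Lebesgue measure, is a Borel measure on Ω. In particular, for every Borel set E the set ∇h(E) is Lebesgue measurable, and MA(h) is countably additive. -/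
open scoped RealInnerProductSpace
open MeasureTheory

noncomputable section

/-- Every open set in Euclidean space is a monotone countable union of compact sets. -/
lemma exists_compact_cover_of_isOpen {n : ℕ} (U : Set (EuclideanSpace ℝ (Fin n)))
    (hU : IsOpen U) :
    ∃ K : ℕ → Set (EuclideanSpace ℝ (Fin n)),
      (∀ m, IsCompact (K m)) ∧ Monotone K ∧ (⋃ m, K m) = U := by
  refine ⟨fun m => Metric.closedBall 0 m ∩ {x | Metric.ball x (1/(m+1)) ⊆ U}, ?_, ?_, ?_⟩
  · intro m
    refine (isCompact_closedBall 0 m).inter_right ?_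
    refine isClosed_of_closure_subset ?_
    intro x hx y hy
    have hy' : dist y x < 1/(m+1) := Metric.mem_ball.1 hy
    obtain ⟨x', hx', hd⟩ := Metric.mem_closure_iff.1 hx (1/(m+1) - dist y x) (by linarith)
    have : y ∈ Metric.ball x' (1/(m+1)) := by
      rw [Metric.mem_ball]
      calc dist y x' ≤ dist y x + dist x x' := dist_triangle _ _ _
        _ < 1/(m+1) := by linarith
    exact hx' this
  · intro m m' hmm x hx
    refine ⟨Metric.closedBall_subset_closedBall (by exact_mod_cast hmm) hx.1, ?_⟩
    refine subset_trans (Metric.ball_subset_ball ?_) hx.2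
    have : (m:ℝ) + 1 ≤ (m':ℝ) + 1 := by exact_mod_cast Nat.succ_le_succ hmm
    exact one_div_le_one_div_of_le (by positivity) this
  · ext x
    simp only [Set.mem_iUnion, Set.mem_inter_iff, Set.mem_setOf_eq]
    constructor
    · rintro ⟨m, _, hsub⟩
      exact hsub (Metric.mem_ball_self (by positivity))
    · intro hx
      obtain ⟨ε, hε, hball⟩ := Metric.isOpen_iff.1 hU x hx
      refine ⟨max ⌈‖x‖⌉₊ ⌈1/ε⌉₊, ?_, ?_⟩
      · rw [Metric.mem_closedBall, dist_zero_right]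
        calc ‖x‖ ≤ (⌈‖x‖⌉₊ : ℝ) := Nat.le_ceil _
          _ ≤ _ := by exact_mod_cast Nat.le_max_left _ _
      · refine subset_trans (Metric.ball_subset_ball ?_) hball
        have h1 : (1:ℝ)/ε ≤ (⌈1/ε⌉₊ : ℝ) := Nat.le_ceil _
        have h2 : (⌈1/ε⌉₊:ℝ) ≤ ((max ⌈‖x‖⌉₊ ⌈1/ε⌉₊ : ℕ):ℝ) := by
          exact_mod_cast Nat.le_max_right _ _
        have h3 : (1:ℝ)/ε < (max ⌈‖x‖⌉₊ ⌈1/ε⌉₊ : ℕ) + 1 := by linarith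
        rw [div_lt_iff₀ hε] at h3
        rw [div_le_iff₀ (by positivity)]
        nlinarith

lemma isClosed_gradientImage_biUnion {n : ℕ} {Ω : Set (EuclideanSpace ℝ (Fin n))}
    {h : EuclideanSpace ℝ (Fin n) → ℝ} (hΩopen : IsOpen Ω) (hcont : ContinuousOn h Ω)
    {K : Set (EuclideanSpace ℝ (Fin n))} (hK : IsCompact K) (hKΩ : K ⊆ Ω) :
    IsClosed (⋃ x ∈ K, gradientImage Ω h x) := by
  refine IsSeqClosed.isClosed ?_
  intro ps p hmem htend
  have hex : ∀ k, ∃ x ∈ K, ps k ∈ gradientImage Ω h x := by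
    intro k
    simpa using hmem k
  choose xs hxK hps using hex
  obtain ⟨x, hxK', φ, hφ, hxt⟩ := hK.tendsto_subseq hxK
  refine Set.mem_iUnion₂.2 ⟨x, hxK', ?_⟩
  intro z hz
  have hxΩ : x ∈ Ω := hKΩ hxK'
  have hh : Filter.Tendsto (fun k => h (xs (φ k))) Filter.atTop (nhds (h x)) :=
    ((hcont.continuousAt (hΩopen.mem_nhds hxΩ)).tendsto).comp hxt
  have hinn : Filter.Tendsto (fun k => (⟪z - xs (φ k), ps (φ k)⟫ : ℝ)) Filter.atTop
      (nhds ⟪z - x, p⟫) :=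
    Filter.Tendsto.inner (Filter.Tendsto.const_sub z hxt) (htend.comp hφ.tendsto_atTop)
  exact le_of_tendsto (hh.add hinn)
    (Filter.Eventually.of_forall fun k => hps (φ k) z hz)

/-- On a compact `K ⊆ Ω`, the set of `p` that are subgradients at two distinct points of `K`
is contained in the non-differentiability set of the (Lipschitz) local Legendre transform. -/
lemma volume_dup_compact_zero {n : ℕ} {Ω : Set (EuclideanSpace ℝ (Fin n))}
    {h : EuclideanSpace ℝ (Fin n) → ℝ} (hcont : ContinuousOn h Ω)
    {K : Set (EuclideanSpace ℝ (Fin n))} (hK : IsCompact K) (hKΩ : K ⊆ Ω) :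
    volume {p : EuclideanSpace ℝ (Fin n) | ∃ x ∈ K, ∃ y ∈ K, x ≠ y ∧
      p ∈ gradientImage Ω h x ∧ p ∈ gradientImage Ω h y} = 0 := by
  rcases Set.eq_empty_or_nonempty K with he | hne
  · simp [he]
  obtain ⟨C, hC⟩ := hK.isBounded.subset_closedBall 0
  have hC' : ∀ x ∈ K, ‖x‖ ≤ C := fun x hx => mem_closedBall_zero_iff.1 (hC hx)
  set φ : EuclideanSpace ℝ (Fin n) → ℝ :=
    fun p => sSup ((fun x => ⟪x, p⟫ - h x) '' K) with hφdef
  have hcont' : ∀ p : EuclideanSpace ℝ (Fin n),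
      ContinuousOn (fun x : EuclideanSpace ℝ (Fin n) => (⟪x, p⟫ : ℝ) - h x) K := by
    intro p
    exact ((continuous_id.inner continuous_const).continuousOn).sub (hcont.mono hKΩ)
  have hbdd : ∀ p : EuclideanSpace ℝ (Fin n),
      BddAbove ((fun x => (⟪x, p⟫ : ℝ) - h x) '' K) :=
    fun p => (hK.image_of_continuousOn (hcont' p)).bddAbove
  have hub : ∀ p q : EuclideanSpace ℝ (Fin n), φ p ≤ φ q + C * dist p q := by
    intro p q
    refine csSup_le (hne.image _) ?_
    rintro a ⟨x, hx, rfl⟩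
    dsimp only
    have h1 : (⟪x, q⟫ : ℝ) - h x ≤ φ q := le_csSup (hbdd q) ⟨x, hx, rfl⟩
    have h2 : (⟪x, p - q⟫ : ℝ) ≤ ‖x‖ * ‖p - q‖ := real_inner_le_norm _ _
    have h3 : ‖x‖ * ‖p - q‖ ≤ C * dist p q := by
      rw [dist_eq_norm]
      exact mul_le_mul_of_nonneg_right (hC' x hx) (norm_nonneg _)
    have h4 : (⟪x, p - q⟫ : ℝ) = ⟪x, p⟫ - ⟪x, q⟫ := inner_sub_right _ _ _
    linarith
  have hCnn : C ≤ (C.toNNReal : ℝ) := Real.le_coe_toNNReal C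
  have hlip : LipschitzWith (Real.toNNReal C) φ := by
    refine LipschitzWith.of_dist_le_mul fun p q => ?_
    rw [Real.dist_eq, abs_sub_le_iff]
    have d1 := hub p q
    have d2 := hub q p
    have hd : dist p q = dist q p := dist_comm _ _
    have hdn : (0:ℝ) ≤ dist p q := dist_nonneg
    rw [← hd] at d2
    constructor
    · nlinarith [mul_le_mul_of_nonneg_right hCnn hdn]
    · nlinarith [mul_le_mul_of_nonneg_right hCnn hdn]
  have hsub : ∀ (p x : EuclideanSpace ℝ (Fin n)), x ∈ K → p ∈ gradientImage Ω h x →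
      ∀ q, φ p + ⟪x, q - p⟫ ≤ φ q := by
    intro p x hxK hpx q
    have h1 : φ p ≤ ⟪x, p⟫ - h x := by
      refine csSup_le (hne.image _) ?_
      rintro a ⟨z, hz, rfl⟩
      dsimp only
      have := hpx z (hKΩ hz)
      have h4 : (⟪z - x, p⟫ : ℝ) = ⟪z, p⟫ - ⟪x, p⟫ := inner_sub_left _ _ _
      linarith
    have h2 : (⟪x, q⟫ : ℝ) - h x ≤ φ q := le_csSup (hbdd q) ⟨x, hxK, rfl⟩
    have h3 : (⟪x, q - p⟫ : ℝ) = ⟪x, q⟫ - ⟪x, p⟫ := inner_sub_right _ _ _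
    linarith
  have hgrad : ∀ (p x : EuclideanSpace ℝ (Fin n)), x ∈ K → p ∈ gradientImage Ω h x →
      DifferentiableAt ℝ φ p → ∀ v, (⟪x, v⟫ : ℝ) = fderiv ℝ φ p v := by
    intro p x hxK hpx hdiff v
    have h1 : HasDerivAt (fun t : ℝ => p + t • v) v 0 := by
      simpa using (((hasDerivAt_id (0:ℝ)).smul_const v).const_add p)
    have h2 : HasDerivAt (fun t : ℝ => φ (p + t • v)) (fderiv ℝ φ p v) 0 := by
      have hF : HasFDerivAt φ (fderiv ℝ φ p) ((fun t : ℝ => p + t • v) 0) := by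
        simpa using hdiff.hasFDerivAt
      exact hF.comp_hasDerivAt 0 h1
    have h3 : HasDerivAt (fun t : ℝ => t * ⟪x, v⟫) ⟪x, v⟫ 0 := by
      simpa using hasDerivAt_mul_const (⟪x, v⟫ : ℝ)
    have h4 : HasDerivAt (fun t : ℝ => φ (p + t • v) - t * ⟪x, v⟫)
        (fderiv ℝ φ p v - ⟪x, v⟫) 0 := h2.sub h3
    have hmin : IsLocalMin (fun t : ℝ => φ (p + t • v) - t * ⟪x, v⟫) 0 := by
      refine Filter.Eventually.of_forall fun t => ?_
      have hs := hsub p x hxK hpx (p + t • v)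
      have h5 : (⟪x, (p + t • v) - p⟫ : ℝ) = t * ⟪x, v⟫ := by
        rw [add_sub_cancel_left, real_inner_smul_right]
      simp only []
      rw [zero_smul, add_zero, zero_mul, sub_zero]
      linarith
    have h0 := hmin.hasDerivAt_eq_zero h4
    linarith [h0]
  have hae := hlip.ae_differentiableAt (μ := volume)
  rw [MeasureTheory.ae_iff] at hae
  refine measure_mono_null ?_ hae
  rintro p ⟨x, hx, y, hy, hxy, hpx, hpy⟩
  simp only [Set.mem_setOf_eq]
  intro hdiff
  apply hxy
  have hxv := hgrad p x hx hpx hdiff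
  have hyv := hgrad p y hy hpy hdiff
  have hv : ∀ v, (⟪x - y, v⟫ : ℝ) = 0 := by
    intro v
    rw [inner_sub_left, hxv v, hyv v]
    ring
  have := hv (x - y)
  rw [inner_self_eq_zero] at this
  exact sub_eq_zero.1 this

/-- The set of `p` that are subgradients at two distinct points of `Ω` has measure zero. -/
lemma volume_dup_zero {n : ℕ} {Ω : Set (EuclideanSpace ℝ (Fin n))}
    {h : EuclideanSpace ℝ (Fin n) → ℝ} (hΩopen : IsOpen Ω) (hcont : ContinuousOn h Ω) :
    volume {p : EuclideanSpace ℝ (Fin n) | ∃ x ∈ Ω, ∃ y ∈ Ω, x ≠ y ∧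
      p ∈ gradientImage Ω h x ∧ p ∈ gradientImage Ω h y} = 0 := by
  obtain ⟨K, hKc, hKm, hKU⟩ := exists_compact_cover_of_isOpen Ω hΩopen
  have hKΩ : ∀ m, K m ⊆ Ω := fun m => hKU ▸ Set.subset_iUnion K m
  have key : ∀ m : ℕ, volume {p : EuclideanSpace ℝ (Fin n) | ∃ x ∈ K m, ∃ y ∈ K m, x ≠ y ∧
      p ∈ gradientImage Ω h x ∧ p ∈ gradientImage Ω h y} = 0 :=
    fun m => volume_dup_compact_zero hcont (hKc m) (hKΩ m)
  refine measure_mono_null ?_ (measure_iUnion_null key)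
  rintro p ⟨x, hx, y, hy, hxy, hpx, hpy⟩
  rw [← hKU] at hx hy
  obtain ⟨m₁, hm₁⟩ := Set.mem_iUnion.1 hx
  obtain ⟨m₂, hm₂⟩ := Set.mem_iUnion.1 hy
  exact Set.mem_iUnion.2 ⟨max m₁ m₂, x, hKm (le_max_left _ _) hm₁,
    y, hKm (le_max_right _ _) hm₂, hxy, hpx, hpy⟩

/-- The Monge-Ampère set function `E ↦ λ(∇h(E))` is a (countably additive Borel) measure:
there is a measure `μ` such that `μ E = volume (∇h(E))` for every Borel `E ⊆ Ω`; in
particular every such `∇h(E)` is Lebesgue (null-)measurable. -/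
theorem mongeAmpere_is_measure {n : ℕ}
    (Ω : Set (EuclideanSpace ℝ (Fin n))) (hΩopen : IsOpen Ω) (hΩconv : Convex ℝ Ω)
    (hΩbd : Bornology.IsBounded Ω)
    (h : EuclideanSpace ℝ (Fin n) → ℝ) (hconv : ConvexOn ℝ Ω h) :
    ∃ μ : Measure (EuclideanSpace ℝ (Fin n)),
      (∀ E : Set (EuclideanSpace ℝ (Fin n)), MeasurableSet E → E ⊆ Ω →
        μ E = volume (⋃ x ∈ E, gradientImage Ω h x)) ∧
      (∀ E : Set (EuclideanSpace ℝ (Fin n)), MeasurableSet E → E ⊆ Ω →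
        NullMeasurableSet (⋃ x ∈ E, gradientImage Ω h x) volume) := by
  classical
  have hcont : ContinuousOn h Ω := hconv.continuousOn hΩopen
  set G : Set (EuclideanSpace ℝ (Fin n)) → Set (EuclideanSpace ℝ (Fin n)) :=
    fun E => ⋃ x ∈ E ∩ Ω, gradientImage Ω h x with hGdef
  have hZ : volume {p : EuclideanSpace ℝ (Fin n) | ∃ x ∈ Ω, ∃ y ∈ Ω, x ≠ y ∧
      p ∈ gradientImage Ω h x ∧ p ∈ gradientImage Ω h y} = 0 := volume_dup_zero hΩopen hcont
  -- G of an open set is null measurable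
  have hGopen : ∀ U : Set (EuclideanSpace ℝ (Fin n)), IsOpen U →
      NullMeasurableSet (G U) volume := by
    intro U hU
    obtain ⟨K, hKc, _, hKU⟩ := exists_compact_cover_of_isOpen (U ∩ Ω) (hU.inter hΩopen)
    have hKΩ : ∀ m, K m ⊆ Ω := fun m =>
      subset_trans (hKU ▸ Set.subset_iUnion K m) Set.inter_subset_right
    have hGU : G U = ⋃ m, ⋃ x ∈ K m, gradientImage Ω h x := by
      simp only [hGdef]
      rw [← hKU, Set.biUnion_iUnion]
    rw [hGU]
    exact (MeasurableSet.iUnion fun m =>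
      (isClosed_gradientImage_biUnion hΩopen hcont (hKc m) (hKΩ m)).measurableSet).nullMeasurableSet
  -- G of any measurable set is null measurable
  have hGiUnion : ∀ f : ℕ → Set (EuclideanSpace ℝ (Fin n)),
      G (⋃ i, f i) = ⋃ i, G (f i) := by
    intro f
    simp only [hGdef, Set.iUnion_inter, Set.biUnion_iUnion]
  have hGmeas : ∀ E : Set (EuclideanSpace ℝ (Fin n)), MeasurableSet E →
      NullMeasurableSet (G E) volume := by
    intro E hE
    refine MeasurableSet.induction_on_open
      (C := fun E _ => NullMeasurableSet (G E) volume) hGopen ?_ ?_ E hE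
    · intro t _ ht
      have hsub1 : G Set.univ \ G t ⊆ G tᶜ := by
        rintro p ⟨hp1, hp2⟩
        simp only [hGdef, Set.mem_iUnion, Set.mem_inter_iff] at hp1 hp2 ⊢
        obtain ⟨x, ⟨-, hxΩ⟩, hpx⟩ := hp1
        by_cases hxt : x ∈ t
        · exact absurd ⟨x, ⟨hxt, hxΩ⟩, hpx⟩ hp2
        · exact ⟨x, ⟨hxt, hxΩ⟩, hpx⟩
      have hsub2 : G tᶜ \ (G Set.univ \ G t) ⊆
          {p : EuclideanSpace ℝ (Fin n) | ∃ x ∈ Ω, ∃ y ∈ Ω, x ≠ y ∧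
            p ∈ gradientImage Ω h x ∧ p ∈ gradientImage Ω h y} := by
        rintro p ⟨hp1, hp2⟩
        have hpu : p ∈ G Set.univ := by
          simp only [hGdef, Set.mem_iUnion, Set.mem_inter_iff] at hp1 ⊢
          obtain ⟨x, ⟨-, hxΩ⟩, hpx⟩ := hp1
          exact ⟨x, ⟨trivial, hxΩ⟩, hpx⟩
        have hpt : p ∈ G t := by
          by_contra hc
          exact hp2 ⟨hpu, hc⟩
        simp only [hGdef, Set.mem_iUnion, Set.mem_inter_iff] at hp1 hpt
        obtain ⟨x, ⟨hxt, hxΩ⟩, hpx⟩ := hp1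
        obtain ⟨y, ⟨hyt, hyΩ⟩, hpy⟩ := hpt
        refine ⟨x, hxΩ, y, hyΩ, ?_, hpx, hpy⟩
        rintro rfl
        exact hxt hyt
      have hnm : NullMeasurableSet (G Set.univ \ G t) volume :=
        (hGopen _ isOpen_univ).diff ht
      refine hnm.congr ?_
      rw [MeasureTheory.ae_eq_set]
      constructor
      · rw [Set.diff_eq_empty.2 hsub1]
        exact measure_empty
      · exact measure_mono_null hsub2 hZ
    · intro f _ _ hf
      rw [hGiUnion f]
      exact NullMeasurableSet.iUnion hf
  -- pairwise a.e. disjointness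
  have hdisj : ∀ s t : Set (EuclideanSpace ℝ (Fin n)), Disjoint s t →
      volume (G s ∩ G t) = 0 := by
    intro s t hst
    refine measure_mono_null ?_ hZ
    rintro p ⟨hp1, hp2⟩
    simp only [hGdef, Set.mem_iUnion, Set.mem_inter_iff] at hp1 hp2
    obtain ⟨x, ⟨hxs, hxΩ⟩, hpx⟩ := hp1
    obtain ⟨y, ⟨hyt, hyΩ⟩, hpy⟩ := hp2
    refine ⟨x, hxΩ, y, hyΩ, ?_, hpx, hpy⟩
    rintro rfl
    exact Set.disjoint_left.1 hst hxs hyt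
  have hG0 : G ∅ = ∅ := by simp [hGdef]
  refine ⟨Measure.ofMeasurable (fun E _ => volume (G E)) (by simp [hG0]) ?_, ?_, ?_⟩
  · intro f hfm hfd
    rw [hGiUnion f]
    refine measure_iUnion₀ ?_ fun i => hGmeas _ (hfm i)
    intro i j hij
    exact hdisj _ _ (hfd hij)
  · intro E hE hEΩ
    rw [Measure.ofMeasurable_apply E hE]
    have : G E = ⋃ x ∈ E, gradientImage Ω h x := by
      simp only [hGdef]
      rw [Set.inter_eq_self_of_subset_left hEΩ]
    rw [this]
  · intro E hE hEΩ
    have := hGmeas E hE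
    have hGE : G E = ⋃ x ∈ E, gradientImage Ω h x := by
      simp only [hGdef]
      rw [Set.inter_eq_self_of_subset_left hEΩ]
    rwa [hGE] at this
end
end

section
/- Let I ⊆ ℝ be a bounded open interval, f : I → ℝ a positive continuous function, and φ : I → ℝ a convex function whose Monge-Ampère measure satisfies MA(φ) = f·dx on I (dx the Lebesgue measure). If f is k times continuously differentiable, then φ is (k+2) times continuously differentiable, and φ'' = f. -/
/-!
If `φ' y - φ' x = ∫_{[x,y]} f` for all `x ≤ y`, then `φ'` is a primitive of the continuous
function `f`, which gives both conclusions. Two applications of the Monge–Ampère identity produce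
this: on a singleton it says the subdifferential `[φ'₋(x), φ'₊(x)]` is null, so `φ` is
differentiable; on `[x, y]` the union of the subdifferentials is then `φ' '' [x, y]`, which equals
`[φ'(x), φ'(y)]` because `φ'` is monotone and has the intermediate value property (Darboux).
-/

open MeasureTheory Set Filter Topology

noncomputable section

/-- The one-dimensional gradient image (subdifferential) of `φ` at `x` relative to `I`. -/
def gradientImage1 (I : Set ℝ) (φ : ℝ → ℝ) (x : ℝ) : Set ℝ :=
  {p | ∀ z ∈ I, φ x + p * (z - x) ≤ φ z}

lemma le_slope_iff_add_mul_le {f : ℝ → ℝ} {x z p : ℝ} (h : x < z) :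
    p ≤ slope f x z ↔ f x + p * (z - x) ≤ f z := by
  rw [slope_def_field, le_div_iff₀ (sub_pos.2 h)]
  constructor <;> intro <;> linarith

lemma slope_le_iff_add_mul_le {f : ℝ → ℝ} {x z p : ℝ} (h : z < x) :
    slope f z x ≤ p ↔ f x + p * (z - x) ≤ f z := by
  rw [slope_def_field, div_le_iff₀ (sub_pos.2 h)]
  constructor <;> intro <;> linarith

namespace ConvexOn

variable {S : Set ℝ} {φ : ℝ → ℝ} {x : ℝ}

theorem gradientImage1_eq_Icc (hφ : ConvexOn ℝ S φ) (hx : x ∈ interior S) :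
    gradientImage1 S φ x = Icc (derivWithin φ (Iio x) x) (derivWithin φ (Ioi x) x) := by
  have hS : ∀ᶠ z in 𝓝 x, z ∈ S := mem_interior_iff_mem_nhds.1 hx
  ext p
  constructor
  · intro hp
    constructor
    · refine le_of_tendsto ((hasDerivWithinAt_iff_tendsto_slope' self_notMem_Iio).1
        (hφ.hasDerivWithinAt_leftDeriv_of_mem_interior hx)) ?_
      filter_upwards [nhdsWithin_le_nhds hS, self_mem_nhdsWithin] with z hzS (hzx : z < x)
      rw [slope_comm, slope_le_iff_add_mul_le hzx]
      exact hp z hzS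
    · refine ge_of_tendsto ((hasDerivWithinAt_iff_tendsto_slope' self_notMem_Ioi).1
        (hφ.hasDerivWithinAt_rightDeriv_of_mem_interior hx)) ?_
      filter_upwards [nhdsWithin_le_nhds hS, self_mem_nhdsWithin] with z hzS (hxz : x < z)
      rw [le_slope_iff_add_mul_le hxz]
      exact hp z hzS
  · rintro ⟨hleft, hright⟩ z hz
    rcases lt_trichotomy z x with hzx | rfl | hxz
    · exact (slope_le_iff_add_mul_le hzx).1
        ((hφ.slope_le_leftDeriv_of_mem_interior hz hx hzx).trans hleft)
    · simp
    · exact (le_slope_iff_add_mul_le hxz).1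
        (hright.trans (hφ.rightDeriv_le_slope_of_mem_interior hx hz hxz))

theorem hasDerivAt_of_volume_gradientImage1_eq_zero (hφ : ConvexOn ℝ S φ) (hx : x ∈ interior S)
    (h : volume (gradientImage1 S φ x) = 0) :
    HasDerivAt φ (derivWithin φ (Ioi x) x) x := by
  rw [hφ.gradientImage1_eq_Icc hx, Real.volume_Icc, ENNReal.ofReal_eq_zero, sub_nonpos] at h
  have hleft : HasDerivWithinAt φ (derivWithin φ (Ioi x) x) (Iio x) x := by
    rw [le_antisymm h (hφ.leftDeriv_le_rightDeriv_of_mem_interior hx)]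
    exact hφ.hasDerivWithinAt_leftDeriv_of_mem_interior hx
  have hpunctured := hleft.union (hφ.hasDerivWithinAt_rightDeriv_of_mem_interior hx)
  rwa [Iio_union_Ioi, compl_eq_univ_sdiff, hasDerivWithinAt_sdiff_singleton,
    hasDerivWithinAt_univ] at hpunctured

theorem gradientImage1_eq_singleton (hφ : ConvexOn ℝ S φ) (hx : x ∈ interior S)
    (hd : DifferentiableAt ℝ φ x) : gradientImage1 S φ x = {deriv φ x} := by
  rw [hφ.gradientImage1_eq_Icc hx, hd.hasDerivAt.hasDerivWithinAt.derivWithin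
    (uniqueDiffWithinAt_Iio x), hd.hasDerivAt.hasDerivWithinAt.derivWithin
    (uniqueDiffWithinAt_Ioi x), Icc_self]

theorem biUnion_gradientImage1_Icc (hφ : ConvexOn ℝ S φ) (hS : IsOpen S)
    (hd : ∀ t ∈ S, DifferentiableAt ℝ φ t) {y : ℝ} (hx : x ∈ S) (hy : y ∈ S) (hxy : x ≤ y) :
    ⋃ t ∈ Icc x y, gradientImage1 S φ t = Icc (deriv φ x) (deriv φ y) := by
  have hxyS : Icc x y ⊆ S := hφ.1.ordConnected.out hx hy
  have hsingle : ∀ t ∈ Icc x y, gradientImage1 S φ t = {deriv φ t} := fun t ht =>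
    hφ.gradientImage1_eq_singleton (hS.interior_eq.symm ▸ hxyS ht) (hd t (hxyS ht))
  rw [iUnion₂_congr hsingle, ← image_eq_iUnion]
  refine ((hφ.monotoneOn_deriv hd).mono hxyS).image_Icc_subset.antisymm ?_
  exact (ordConnected_Icc.image_deriv fun t ht => hd t (hxyS ht)).out
    (mem_image_of_mem _ (left_mem_Icc.2 hxy)) (mem_image_of_mem _ (right_mem_Icc.2 hxy))

end ConvexOn

lemma sub_eq_integral_of_volume_Icc_eq {g f : ℝ → ℝ} {x y : ℝ} (hxy : x ≤ y) (hg : g x ≤ g y)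
    (hf : ContinuousOn f (Icc x y)) (hf0 : ∀ t ∈ Icc x y, 0 ≤ f t)
    (h : volume (Icc (g x) (g y)) = ∫⁻ t in Icc x y, ENNReal.ofReal (f t)) :
    g y - g x = ∫ t in x..y, f t := by
  rw [intervalIntegral.integral_of_le hxy, ← integral_Icc_eq_integral_Ioc]
  rw [Real.volume_Icc, ← ofReal_integral_eq_lintegral_ofReal hf.integrableOn_Icc
    ((ae_restrict_iff' measurableSet_Icc).2 (ae_of_all _ hf0))] at h
  exact (ENNReal.ofReal_eq_ofReal_iff (sub_nonneg.2 hg)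
    (setIntegral_nonneg measurableSet_Icc hf0)).1 h

lemma hasDerivAt_of_sub_eq_integral {g f : ℝ → ℝ} {U : Set ℝ} (hU : IsOpen U)
    (hf : ContinuousOn f U)
    (hg : ∀ x ∈ U, ∀ y ∈ U, x ≤ y → g y - g x = ∫ t in x..y, f t) {x : ℝ} (hx : x ∈ U) :
    HasDerivAt g (f x) x := by
  have hprimitive : ∀ y ∈ U, g y = g x + ∫ t in x..y, f t := by
    intro y hy
    rcases le_total x y with hxy | hyx
    · linarith [hg x hx y hy hxy]
    · linarith [hg y hy x hx hyx, intervalIntegral.integral_symm (μ := volume) (f := f) x y]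
  refine ((intervalIntegral.integral_hasDerivAt_right IntervalIntegrable.refl
    (hf.stronglyMeasurableAtFilter hU x hx) (hf.continuousAt (hU.mem_nhds hx))).const_add
    (g x)).congr_of_eventuallyEq ?_
  filter_upwards [hU.mem_nhds hx] using hprimitive

lemma contDiffOn_succ_of_hasDerivAt {g g' : ℝ → ℝ} {U : Set ℝ} {n : ℕ} (hU : IsOpen U)
    (hg : ∀ x ∈ U, HasDerivAt g (g' x) x) (hg' : ContDiffOn ℝ n g' U) :
    ContDiffOn ℝ (n + 1) g U := by
  rw [contDiffOn_succ_iff_deriv_of_isOpen hU]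
  exact ⟨fun x hx => (hg x hx).differentiableAt.differentiableWithinAt, by simp,
    hg'.congr fun x hx => (hg x hx).deriv⟩

theorem mongeAmpere_regularity_dim_one_general (a b : ℝ)
    (f φ : ℝ → ℝ)
    (hfpos : ∀ x ∈ Set.Ioo a b, 0 < f x)
    (hφconv : ConvexOn ℝ (Set.Ioo a b) φ)
    (k : ℕ) (hf : ContDiffOn ℝ k f (Set.Ioo a b))
    (hMA : ∀ E : Set ℝ, MeasurableSet E → E ⊆ Set.Ioo a b →
      volume (⋃ x ∈ E, gradientImage1 (Set.Ioo a b) φ x) =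
        ∫⁻ x in E, ENNReal.ofReal (f x) ∂volume) :
    ContDiffOn ℝ (k + 2) φ (Set.Ioo a b) ∧
      ∀ x ∈ Set.Ioo a b, deriv (deriv φ) x = f x := by
  have hfcont : ContinuousOn f (Ioo a b) := hf.continuousOn
  have hdiff : ∀ x ∈ Ioo a b, DifferentiableAt ℝ φ x := by
    intro x hx
    have h := hMA {x} (measurableSet_singleton x) (singleton_subset_iff.2 hx)
    rw [biUnion_singleton, setLIntegral_measure_zero _ _ (measure_singleton x)] at h
    exact (hφconv.hasDerivAt_of_volume_gradientImage1_eq_zero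
      (by rwa [interior_Ioo]) h).differentiableAt
  have hφ' : ∀ x ∈ Ioo a b, ∀ y ∈ Ioo a b, x ≤ y →
      deriv φ y - deriv φ x = ∫ t in x..y, f t := by
    intro x hx y hy hxy
    have hxyI : Icc x y ⊆ Ioo a b := ordConnected_Ioo.out hx hy
    have h := hMA (Icc x y) measurableSet_Icc hxyI
    rw [hφconv.biUnion_gradientImage1_Icc isOpen_Ioo hdiff hx hy hxy] at h
    exact sub_eq_integral_of_volume_Icc_eq hxy (hφconv.monotoneOn_deriv hdiff hx hy hxy)
      (hfcont.mono hxyI) (fun t ht => (hfpos t (hxyI ht)).le) h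
  have hφ'' : ∀ x ∈ Ioo a b, HasDerivAt (deriv φ) (f x) x :=
    fun x hx => hasDerivAt_of_sub_eq_integral isOpen_Ioo hfcont hφ' hx
  refine ⟨?_, fun x hx => (hφ'' x hx).deriv⟩
  have hC : ContDiffOn ℝ (k + 1 + 1 : ℕ) φ (Ioo a b) :=
    contDiffOn_succ_of_hasDerivAt isOpen_Ioo (fun x hx => (hdiff x hx).hasDerivAt)
      (contDiffOn_succ_of_hasDerivAt isOpen_Ioo hφ'' hf)
  exact_mod_cast hC

/-- Regularity of solutions to the one-dimensional Monge-Ampère equation: if the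
Monge-Ampère measure of the convex function `φ` on a bounded open interval is `f·dx`
with `f` positive and `Cᵏ`, then `φ` is `C^{k+2}` with `φ'' = f`. -/
theorem mongeAmpere_regularity_dim_one (a b : ℝ) (hab : a < b)
    (f φ : ℝ → ℝ)
    (hfpos : ∀ x ∈ Set.Ioo a b, 0 < f x)
    (hfcont : ContinuousOn f (Set.Ioo a b))
    (hφconv : ConvexOn ℝ (Set.Ioo a b) φ)
    (k : ℕ) (hf : ContDiffOn ℝ k f (Set.Ioo a b))
    (hMA : ∀ E : Set ℝ, MeasurableSet E → E ⊆ Set.Ioo a b →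
      volume (⋃ x ∈ E, gradientImage1 (Set.Ioo a b) φ x) =
        ∫⁻ x in E, ENNReal.ofReal (f x) ∂volume) :
    ContDiffOn ℝ (k + 2) φ (Set.Ioo a b) ∧
      ∀ x ∈ Set.Ioo a b, deriv (deriv φ) x = f x :=
  mongeAmpere_regularity_dim_one_general a b f φ hfpos hφconv k hf hMA
end
end

section
/- Let τ ⊆ ℝⁿ be an open convex set and h : τ → ℝ a convex function. Then there exists a sequence of compact convex sets Δ_m ⊆ τ with Δ_{m-1} ⊆ Δ_m and ⋃_m Δ_m = τ, such that on each Δ_m the function h is a uniform limit of convex functions each of which is a maximum of finitely many affine linear functions with rational coefficients. -/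
noncomputable section

open Metric Set

lemma clm_eq_sum {n : ℕ} (m : EuclideanSpace ℝ (Fin n) →L[ℝ] ℝ) (y : EuclideanSpace ℝ (Fin n)) :
    m y = ∑ j, y j * m (EuclideanSpace.single j 1) := by
  have hy : y = ∑ j, y j • EuclideanSpace.single j (1:ℝ) := by
    ext i
    rw [WithLp.ofLp_sum, Finset.sum_apply]
    simp [EuclideanSpace.single_apply]
  conv_lhs => rw [hy]
  simp [map_sum, smul_eq_mul]

lemma coord_le_norm {n : ℕ} (y : EuclideanSpace ℝ (Fin n)) (j : Fin n) : |y j| ≤ ‖y‖ := by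
  rw [EuclideanSpace.norm_eq]
  have h1 : |y j| = Real.sqrt (‖y j‖ ^ 2) := by
    rw [Real.sqrt_sq_eq_abs]; simp [Real.norm_eq_abs]
  rw [h1]
  apply Real.sqrt_le_sqrt
  exact Finset.single_le_sum (f := fun i => ‖y i‖ ^ 2) (fun i _ => by positivity)
    (Finset.mem_univ j)

lemma exists_support {n : ℕ} {τ : Set (EuclideanSpace ℝ (Fin n))}
    (hτopen : IsOpen τ) {h : EuclideanSpace ℝ (Fin n) → ℝ} (hconv : ConvexOn ℝ τ h)
    (hcont : ContinuousOn h τ) {x : EuclideanSpace ℝ (Fin n)} (hx : x ∈ τ) :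
    ∃ (m : EuclideanSpace ℝ (Fin n) →L[ℝ] ℝ) (c : ℝ),
      (∀ y ∈ τ, m y + c ≤ h y) ∧ m x + c = h x := by
  set S : Set ((EuclideanSpace ℝ (Fin n)) × ℝ) := {p | p.1 ∈ τ ∧ h p.1 < p.2} with hS
  have hSconv : Convex ℝ S := by
    rintro ⟨y, t⟩ ⟨hy, hyt⟩ ⟨z, s⟩ ⟨hz, hzs⟩ a b ha hb hab
    refine ⟨hconv.1 hy hz ha hb hab, ?_⟩
    have h1 : h (a • y + b • z) ≤ a * h y + b * h z := hconv.2 hy hz ha hb hab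
    have h2 : a * h y + b * h z < a * t + b * s := by
      rcases hb.lt_or_eq with hb' | hb'
      · exact add_lt_add_of_le_of_lt (mul_le_mul_of_nonneg_left hyt.le ha)
          (mul_lt_mul_of_pos_left hzs hb')
      · have ha1 : a = 1 := by linarith
        simp [← hb', ha1, hyt]
    simpa using lt_of_le_of_lt h1 h2
  have hSopen : IsOpen S := by
    rw [isOpen_iff_mem_nhds]
    rintro ⟨y, t⟩ ⟨hy, hyt⟩
    have hcy : ContinuousAt h y := hcont.continuousAt (hτopen.mem_nhds hy)
    have hφ : ContinuousAt (fun p : (EuclideanSpace ℝ (Fin n)) × ℝ => p.2 - h p.1) (y, t) :=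
      continuousAt_snd.sub (hcy.comp continuousAt_fst)
    have h1 : τ ×ˢ (univ : Set ℝ) ∈ nhds (y, t) := prod_mem_nhds (hτopen.mem_nhds hy) Filter.univ_mem
    have h2 : (fun p : (EuclideanSpace ℝ (Fin n)) × ℝ => p.2 - h p.1) ⁻¹' Ioi 0 ∈ nhds (y, t) :=
      hφ.preimage_mem_nhds (Ioi_mem_nhds (by simpa using sub_pos.2 hyt))
    filter_upwards [h1, h2] with p hp1 hp2
    exact ⟨hp1.1, sub_pos.mp hp2⟩
  have hxS : (x, h x) ∉ S := fun hmem => lt_irrefl _ hmem.2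
  obtain ⟨f, hf⟩ := geometric_hahn_banach_open_point hSconv hSopen hxS
  set g : EuclideanSpace ℝ (Fin n) →L[ℝ] ℝ :=
    f.comp (ContinuousLinearMap.inl ℝ (EuclideanSpace ℝ (Fin n)) ℝ) with hg
  set α : ℝ := f (0, 1) with hα
  have hdecomp : ∀ (y : EuclideanSpace ℝ (Fin n)) (t : ℝ), f (y, t) = g y + t * α := by
    intro y t
    have hyt : (y, t) = (y, (0:ℝ)) + t • ((0 : EuclideanSpace ℝ (Fin n)), (1:ℝ)) := by
      simp [Prod.ext_iff]
    rw [hyt, map_add, map_smul]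
    simp [hg, smul_eq_mul]
    exact Or.inl hα.symm
  have hαneg : α < 0 := by
    have h1 : f (x, h x + 1) < f (x, h x) := hf _ ⟨hx, lt_add_one _⟩
    rw [hdecomp, hdecomp] at h1
    linarith
  have key : ∀ y ∈ τ, g y + h y * α ≤ g x + h x * α := by
    intro y hy
    by_contra hlt
    push_neg at hlt
    set D : ℝ := g y + h y * α - (g x + h x * α) with hD
    have hDpos : 0 < D := by simp [hD]; linarith
    set s : ℝ := D / (2 * (-α)) with hs
    have hspos : 0 < s := div_pos hDpos (by linarith)
    have hfs := hf (y, h y + s) ⟨hy, lt_add_of_pos_right _ hspos⟩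
    rw [hdecomp, hdecomp] at hfs
    have hαne : α ≠ 0 := ne_of_lt hαneg
    have hsα : s * α = -D / 2 := by
      rw [hs]
      field_simp
    have hexp : g y + (h y + s) * α = g y + h y * α + s * α := by ring
    rw [hexp, hsα] at hfs
    rw [hD] at hfs
    linarith
  set β : ℝ := -α with hβ
  have hβpos : 0 < β := by simp [hβ]; linarith
  refine ⟨β⁻¹ • g, h x - β⁻¹ * g x, ?_, ?_⟩
  · intro y hy
    have h1 : g y - g x ≤ β * (h y - h x) := by
      have h2 := key y hy
      have h3 : β * (h y - h x) = h x * α - h y * α := by rw [hβ]; ring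
      linarith
    have h4 : β⁻¹ * (g y - g x) ≤ h y - h x := by
      rw [inv_mul_le_iff₀ hβpos]
      nlinarith
    simp only [ContinuousLinearMap.smul_apply, smul_eq_mul]
    linarith [h4]
  · simp only [ContinuousLinearMap.smul_apply, smul_eq_mul]
    ring

lemma approx_lemma {n : ℕ} {τ : Set (EuclideanSpace ℝ (Fin n))}
    (hτopen : IsOpen τ)
    {h : EuclideanSpace ℝ (Fin n) → ℝ} (hconv : ConvexOn ℝ τ h)
    {Δ : Set (EuclideanSpace ℝ (Fin n))} (hΔc : IsCompact Δ) (hΔτ : Δ ⊆ τ)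
    {ε : ℝ} (hε : 0 < ε) :
    ∃ (F : Finset ((Fin n → ℚ) × ℚ)) (hF : F.Nonempty),
      ∀ x ∈ Δ, |h x - F.sup' hF (fun q => (∑ j, (q.1 j : ℝ) * x j) + (q.2 : ℝ))| ≤ ε := by
  rcases Δ.eq_empty_or_nonempty with hΔe | ⟨x₀, hx₀⟩
  · refine ⟨{((0 : Fin n → ℚ), (0 : ℚ))}, Finset.singleton_nonempty _, ?_⟩
    intro x hx
    rw [hΔe] at hx
    exact absurd hx (notMem_empty x)
  · have hcont : ContinuousOn h τ := hconv.continuousOn hτopen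
    obtain ⟨R, hR⟩ := hΔc.isBounded.subset_closedBall 0
    set M : ℝ := |R| + 1 with hM
    have hMpos : 0 < M := by positivity
    have hyb : ∀ y ∈ Δ, ∀ j, |y j| ≤ M := by
      intro y hy j
      have h1 : ‖y‖ ≤ R := by simpa [dist_zero_right] using hR hy
      have h2 := coord_le_norm y j
      have h3 : R ≤ |R| := le_abs_self R
      linarith [h2.trans h1]
    set δ : ℝ := ε / (2 * (2 * n * M + 1)) with hδdef
    have hnM : (0:ℝ) ≤ (n : ℝ) * M := by positivity
    have hδ : 0 < δ := by
      apply div_pos hε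
      positivity
    -- key pointwise approximation
    have key : ∀ x ∈ Δ, ∃ p : (Fin n → ℚ) × ℚ,
        (∀ y ∈ Δ, (∑ j, (p.1 j : ℝ) * y j) + (p.2 : ℝ) ≤ h y) ∧
        h x - ε / 2 ≤ (∑ j, (p.1 j : ℝ) * x j) + (p.2 : ℝ) := by
      intro x hx
      obtain ⟨m, c, hle, heq⟩ := exists_support hτopen hconv hcont (hΔτ hx)
      set a : Fin n → ℝ := fun j => m (EuclideanSpace.single j 1) with ha
      choose q hq using fun j => exists_rat_near (K := ℝ) (a j) hδ
      have hest : ∀ y ∈ Δ, |(∑ j, (q j : ℝ) * y j) - m y| ≤ n * δ * M := by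
        intro y hy
        rw [clm_eq_sum m y]
        have h1 : (∑ j, (q j : ℝ) * y j) - ∑ j, y j * a j
            = ∑ j, ((q j : ℝ) - a j) * y j := by
          rw [← Finset.sum_sub_distrib]
          exact Finset.sum_congr rfl fun j _ => by ring
        rw [h1]
        calc |∑ j, ((q j : ℝ) - a j) * y j| ≤ ∑ j, |((q j : ℝ) - a j) * y j| :=
              Finset.abs_sum_le_sum_abs _ _
          _ ≤ ∑ _j : Fin n, δ * M := by
              apply Finset.sum_le_sum
              intro j _
              rw [abs_mul]
              apply mul_le_mul _ (hyb y hy j) (abs_nonneg _) hδ.le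
              rw [abs_sub_comm]
              exact (hq j).le
          _ = n * δ * M := by
              rw [Finset.sum_const, Finset.card_univ, Fintype.card_fin]
              push_cast
              ring
      obtain ⟨r, hr1, hr2⟩ := exists_rat_btwn
        (show c - n * δ * M - δ < c - n * δ * M by linarith)
      refine ⟨(q, r), ?_, ?_⟩
      · intro y hy
        have h1 := hest y hy
        have h2 := hle y (hΔτ hy)
        have h3 : (∑ j, (q j : ℝ) * y j) ≤ m y + n * δ * M := by
          have := abs_le.mp h1
          linarith [this.1, this.2]
        simp only
        linarith
      · have h1 := hest x hx
        have h3 : m x - n * δ * M ≤ (∑ j, (q j : ℝ) * x j) := by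
          have := abs_le.mp h1
          linarith [this.1, this.2]
        have hhalf : δ * (2 * n * M + 1) = ε / 2 := by
          rw [hδdef]
          field_simp
        simp only
        nlinarith [heq]
    choose! p hp1 hp2 using key
    set L : ((Fin n → ℚ) × ℚ) → EuclideanSpace ℝ (Fin n) → ℝ :=
      fun pr y => (∑ j, (pr.1 j : ℝ) * y j) + (pr.2 : ℝ) with hL
    have hLcont : ∀ pr, Continuous (L pr) := by
      intro pr
      apply Continuous.add _ continuous_const
      apply continuous_finset_sum
      intro j _
      exact continuous_const.mul (by simpa using (EuclideanSpace.proj j (𝕜 := ℝ)).continuous)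
    set V : EuclideanSpace ℝ (Fin n) → Set (EuclideanSpace ℝ (Fin n)) :=
      fun x => τ ∩ (fun y => h y - L (p x) y) ⁻¹' Iio ε with hV
    have hVopen : ∀ x, IsOpen (V x) := by
      intro x
      exact (hcont.sub (hLcont (p x)).continuousOn).isOpen_inter_preimage hτopen isOpen_Iio
    have hcover : Δ ⊆ ⋃ x ∈ Δ, V x := by
      intro y hy
      refine mem_iUnion₂.2 ⟨y, hy, hΔτ hy, ?_⟩
      have := hp2 y hy
      simp only [hV, mem_preimage, mem_Iio]
      simp only [hL]
      linarith
    obtain ⟨b', hb'sub, hb'fin, hsub⟩ :=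
      hΔc.elim_finite_subcover_image (fun x _ => hVopen x) hcover
    refine ⟨insert (p x₀) (hb'fin.toFinset.image p), Finset.insert_nonempty _ _, ?_⟩
    intro y hy
    have hub : ∀ f ∈ insert (p x₀) (hb'fin.toFinset.image p),
        (∑ j, (f.1 j : ℝ) * y j) + (f.2 : ℝ) ≤ h y := by
      intro f hf
      rcases Finset.mem_insert.mp hf with hf | hf
      · subst hf; exact hp1 x₀ hx₀ y hy
      · obtain ⟨x, hxmem, rfl⟩ := Finset.mem_image.mp hf
        exact hp1 x (hb'sub (hb'fin.mem_toFinset.mp hxmem)) y hy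
    have hupper := Finset.sup'_le (Finset.insert_nonempty _ _)
      (fun q : (Fin n → ℚ) × ℚ => (∑ j, (q.1 j : ℝ) * y j) + (q.2 : ℝ)) hub
    have hlower : h y - ε ≤ (insert (p x₀) (hb'fin.toFinset.image p)).sup'
        (Finset.insert_nonempty _ _) (fun q : (Fin n → ℚ) × ℚ => (∑ j, (q.1 j : ℝ) * y j) + (q.2 : ℝ)) := by
      obtain ⟨x, hxb, hyV⟩ := mem_iUnion₂.mp (hsub hy)
      have hmem : p x ∈ insert (p x₀) (hb'fin.toFinset.image p) :=
        Finset.mem_insert_of_mem (Finset.mem_image_of_mem p (hb'fin.mem_toFinset.mpr hxb))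
      have h1 := Finset.le_sup' (fun q : (Fin n → ℚ) × ℚ => (∑ j, (q.1 j : ℝ) * y j) + (q.2 : ℝ)) hmem
      have h2 : h y - L (p x) y < ε := hyV.2
      simp only [hL] at h2
      linarith
    rw [abs_le]
    constructor <;> linarith

lemma isClosed_ballsub {n : ℕ} {τ : Set (EuclideanSpace ℝ (Fin n))} (r : ℝ) :
    IsClosed {x : EuclideanSpace ℝ (Fin n) | ball x r ⊆ τ} := by
  have heq : {x : EuclideanSpace ℝ (Fin n) | ball x r ⊆ τ}
      = ⋂ z ∈ τᶜ, {x | r ≤ dist x z} := by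
    ext x
    simp only [mem_setOf_eq, mem_iInter, mem_compl_iff]
    constructor
    · intro hs z hz
      by_contra hlt
      push_neg at hlt
      exact hz (hs (by rwa [mem_ball, dist_comm]))
    · intro hz z hzb
      by_contra hz'
      rw [mem_ball] at hzb
      have := hz z hz'
      rw [dist_comm] at this
      linarith
  rw [heq]
  exact isClosed_biInter fun z _ =>
    isClosed_le continuous_const (continuous_id.dist continuous_const)

lemma convex_ballsub {n : ℕ} {τ : Set (EuclideanSpace ℝ (Fin n))} (hτconv : Convex ℝ τ)
    (r : ℝ) : Convex ℝ {x : EuclideanSpace ℝ (Fin n) | ball x r ⊆ τ} := by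
  intro x hx y hy a b ha hb hab
  intro z hz
  set v := z - (a • x + b • y) with hv
  have hzn : ‖v‖ < r := by
    rw [mem_ball, dist_eq_norm] at hz
    exact hz
  have hx' : x + v ∈ τ := hx (by simpa [mem_ball, dist_eq_norm] using hzn)
  have hy' : y + v ∈ τ := hy (by simpa [mem_ball, dist_eq_norm] using hzn)
  have hmem := hτconv hx' hy' ha hb hab
  have hkey : a • (x + v) + b • (y + v) = (a • x + b • y) + (a + b) • v := by module
  rw [hab, one_smul] at hkey
  have hz' : (a • x + b • y) + v = z := by simp [hv]
  rw [hkey, hz'] at hmem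
  exact hmem

/-- Any convex function on an open convex set `τ ⊆ ℝⁿ` is, on the members of an increasing
exhaustion of `τ` by compact convex subsets, a uniform limit of finite maxima of affine
linear functions with rational coefficients. -/
theorem convex_exhaustion_rational_pl_approx {n : ℕ}
    (τ : Set (EuclideanSpace ℝ (Fin n))) (hτopen : IsOpen τ) (hτconv : Convex ℝ τ)
    (h : EuclideanSpace ℝ (Fin n) → ℝ) (hconv : ConvexOn ℝ τ h) :
    ∃ Δ : ℕ → Set (EuclideanSpace ℝ (Fin n)),
      (∀ m, IsCompact (Δ m) ∧ Convex ℝ (Δ m) ∧ Δ m ⊆ τ) ∧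
      Monotone Δ ∧
      (⋃ m, Δ m) = τ ∧
      (∀ m, ∀ ε > (0 : ℝ), ∃ (F : Finset ((Fin n → ℚ) × ℚ)) (hF : F.Nonempty),
        ∀ x ∈ Δ m,
          |h x - F.sup' hF (fun q => (∑ j, (q.1 j : ℝ) * x j) + (q.2 : ℝ))| ≤ ε) := by
  set Δ : ℕ → Set (EuclideanSpace ℝ (Fin n)) :=
    fun m => closedBall 0 (m : ℝ) ∩ {x | ball x (1 / (m + 1)) ⊆ τ} with hΔ
  have hsubτ : ∀ m, Δ m ⊆ τ := by
    intro m x hx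
    exact hx.2 (mem_ball_self (by positivity))
  have hcompact : ∀ m, IsCompact (Δ m) :=
    fun m => (isCompact_closedBall 0 (m : ℝ)).inter_right (isClosed_ballsub _)
  refine ⟨Δ, fun m => ⟨hcompact m, ?_, hsubτ m⟩, ?_, ?_, ?_⟩
  · exact (convex_closedBall 0 (m : ℝ)).inter (convex_ballsub hτconv _)
  · -- Monotone
    intro m m' hmm'
    apply inter_subset_inter
    · exact closedBall_subset_closedBall (by exact_mod_cast hmm')
    · intro x hx
      refine Subset.trans (ball_subset_ball ?_) hx
      apply one_div_le_one_div_of_le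
      · positivity
      · have : (m : ℝ) ≤ (m' : ℝ) := by exact_mod_cast hmm'
        linarith
  · -- union
    apply Subset.antisymm
    · exact iUnion_subset hsubτ
    · intro x hx
      obtain ⟨r, hr, hball⟩ := Metric.isOpen_iff.mp hτopen x hx
      obtain ⟨m₁, hm₁⟩ := exists_nat_ge ‖x‖
      obtain ⟨m₂, hm₂⟩ := exists_nat_ge (1 / r)
      refine mem_iUnion.2 ⟨m₁ + m₂, ?_, ?_⟩
      · rw [mem_closedBall, dist_zero_right]
        have : (m₁ : ℝ) ≤ ((m₁ + m₂ : ℕ) : ℝ) := by push_cast; linarith [Nat.cast_nonneg (α := ℝ) m₂]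
        linarith
      · refine Subset.trans (ball_subset_ball ?_) hball
        have h1 : 1 / r ≤ ((m₁ + m₂ : ℕ) : ℝ) + 1 := by
          push_cast
          linarith [Nat.cast_nonneg (α := ℝ) m₁]
        have h2 : (0:ℝ) < 1 / r := by positivity
        have := one_div_le_one_div_of_le h2 h1
        rwa [one_div_one_div] at this
  · intro m ε hε
    exact approx_lemma hτopen hconv (hcompact m) (hsubτ m) hε
end
end
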